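/- Assume F is constant. Let μ be a Borel probability measure on K_n invariant under the shift T and under φ(t,·) for every t ≥ 0. Define W(u) = −∂₂V(u_{-1},u_0) − ∂₁V(u_0,u_1) + F and v(μ) = ∫ (φ(1,u)_0 − u_0) dμ(u). Then ∫ W(u)² dμ(u) = F · v(μ). Consequently, if v(μ) = 0, then for μ-almost every u ∈ K_n one has −∂₂V(u_{j-1},u_j) − ∂₁V(u_j,u_{j+1}) + F = 0 for all j ∈ ℤ, i.e. μ-almost every u is an equilibrium of the FK equation. -/

import Mathlib

open MeasureTheory Set Filter Topology

/-- First partial derivative `∂₁V`. -/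
noncomputable def V1 (V : ℝ → ℝ → ℝ) (x y : ℝ) : ℝ := deriv (fun s => V s y) x

/-- Second partial derivative `∂₂V`. -/
noncomputable def V2 (V : ℝ → ℝ → ℝ) (x y : ℝ) : ℝ := deriv (fun s => V x s) y

/-- Mixed partial derivative `∂₁∂₂V`. -/
noncomputable def V12 (V : ℝ → ℝ → ℝ) (x y : ℝ) : ℝ := deriv (fun s => V2 V s y) x

/-- The set of configurations with spacing bounded by `n`, with the product topology. -/
def Kn (n : ℕ) : Set (ℤ → ℝ) := {u | ∀ i : ℤ, |u (i + 1) - u i| ≤ (n : ℝ)}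

/-- `w` has a zero at position `j`. -/
def zeroAt (w : ℤ → ℝ) (j : ℤ) : Prop :=
  ∃ x : ℝ, 0 ≤ x ∧ x < 1 ∧ w j + (w (j + 1) - w j) * x = 0

/-- The shift `(Tu)_i = u_{i-1}` on configurations. -/
def shift (u : ℤ → ℝ) : ℤ → ℝ := fun i => u (i - 1)

/-- The shift `T`, as a self-map of `Kn n`. -/
def shiftK (n : ℕ) (u : Kn n) : Kn n :=
  ⟨shift u.val, by
    intro i
    have h := u.2 (i - 1)
    have h1 : i - 1 + 1 = i := by ring
    rw [h1] at h
    simpa [shift] using h⟩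

/-! ### Auxiliary lemmas -/

lemma hasDerivAt_V1 {V : ℝ → ℝ → ℝ} (hV : ContDiff ℝ 2 (Function.uncurry V)) (x y : ℝ) :
    HasDerivAt (fun s => V s y) (fderiv ℝ (Function.uncurry V) (x, y) (1, 0)) x := by
  have hd : HasFDerivAt (Function.uncurry V) (fderiv ℝ (Function.uncurry V) (x, y)) (x, y) :=
    ((hV.differentiable (by norm_num)) (x, y)).hasFDerivAt
  have hp : HasDerivAt (fun s : ℝ => (s, y)) ((1:ℝ), (0:ℝ)) x :=
    (hasDerivAt_id x).prodMk (hasDerivAt_const x y)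
  exact hd.comp_hasDerivAt x hp

lemma hasDerivAt_V2 {V : ℝ → ℝ → ℝ} (hV : ContDiff ℝ 2 (Function.uncurry V)) (x y : ℝ) :
    HasDerivAt (fun s => V x s) (fderiv ℝ (Function.uncurry V) (x, y) (0, 1)) y := by
  have hd : HasFDerivAt (Function.uncurry V) (fderiv ℝ (Function.uncurry V) (x, y)) (x, y) :=
    ((hV.differentiable (by norm_num)) (x, y)).hasFDerivAt
  have hp : HasDerivAt (fun s : ℝ => (x, s)) ((0:ℝ), (1:ℝ)) y :=
    (hasDerivAt_const y x).prodMk (hasDerivAt_id y)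
  exact hd.comp_hasDerivAt y hp

lemma V1_eq {V : ℝ → ℝ → ℝ} (hV : ContDiff ℝ 2 (Function.uncurry V)) (x y : ℝ) :
    V1 V x y = fderiv ℝ (Function.uncurry V) (x, y) (1, 0) :=
  (hasDerivAt_V1 hV x y).deriv

lemma V2_eq {V : ℝ → ℝ → ℝ} (hV : ContDiff ℝ 2 (Function.uncurry V)) (x y : ℝ) :
    V2 V x y = fderiv ℝ (Function.uncurry V) (x, y) (0, 1) :=
  (hasDerivAt_V2 hV x y).deriv

lemma continuous_V1 {V : ℝ → ℝ → ℝ} (hV : ContDiff ℝ 2 (Function.uncurry V)) :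
    Continuous fun p : ℝ × ℝ => V1 V p.1 p.2 := by
  have h : Continuous fun p : ℝ × ℝ => fderiv ℝ (Function.uncurry V) p ((1:ℝ), (0:ℝ)) :=
    (hV.continuous_fderiv (by norm_num)).clm_apply continuous_const
  exact h.congr fun p => (V1_eq hV p.1 p.2).symm

lemma continuous_V2 {V : ℝ → ℝ → ℝ} (hV : ContDiff ℝ 2 (Function.uncurry V)) :
    Continuous fun p : ℝ × ℝ => V2 V p.1 p.2 := by
  have h : Continuous fun p : ℝ × ℝ => fderiv ℝ (Function.uncurry V) p ((0:ℝ), (1:ℝ)) :=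
    (hV.continuous_fderiv (by norm_num)).clm_apply continuous_const
  exact h.congr fun p => (V2_eq hV p.1 p.2).symm

lemma V1_per {V : ℝ → ℝ → ℝ} (hper : ∀ x y : ℝ, V (x + 1) (y + 1) = V x y) (x y : ℝ) :
    V1 V (x + 1) (y + 1) = V1 V x y := by
  have h1 : (fun s : ℝ => V (s + 1) (y + 1)) = fun s => V s y := funext fun s => hper s y
  calc V1 V (x + 1) (y + 1) = deriv (fun s => V s (y + 1)) (x + 1) := rfl
    _ = deriv (fun s => V (s + 1) (y + 1)) x := (deriv_comp_add_const _ 1 x).symm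
    _ = deriv (fun s => V s y) x := by rw [h1]

lemma V2_per {V : ℝ → ℝ → ℝ} (hper : ∀ x y : ℝ, V (x + 1) (y + 1) = V x y) (x y : ℝ) :
    V2 V (x + 1) (y + 1) = V2 V x y := by
  have h1 : (fun s : ℝ => V (x + 1) (s + 1)) = fun s => V x s := funext fun s => hper x s
  calc V2 V (x + 1) (y + 1) = deriv (fun s => V (x + 1) s) (y + 1) := rfl
    _ = deriv (fun s => V (x + 1) (s + 1)) y := (deriv_comp_add_const _ 1 y).symm
    _ = deriv (fun s => V x s) y := by rw [h1]

lemma per_int {f : ℝ → ℝ → ℝ} (h : ∀ x y : ℝ, f (x + 1) (y + 1) = f x y) (k : ℤ) (x y : ℝ) :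
    f (x + k) (y + k) = f x y := by
  induction k using Int.induction_on with
  | zero => simp
  | succ m ih =>
      have e2 : x + (((m:ℤ) + 1 : ℤ) : ℝ) = (x + ((m:ℤ) : ℝ)) + 1 := by push_cast; ring
      have e3 : y + (((m:ℤ) + 1 : ℤ) : ℝ) = (y + ((m:ℤ) : ℝ)) + 1 := by push_cast; ring
      rw [e2, e3, h, ih]
  | pred m ih =>
      have e2 : x + ((-(m:ℤ) : ℤ) : ℝ) = (x + ((-(m:ℤ) - 1 : ℤ) : ℝ)) + 1 := by push_cast; ring
      have e3 : y + ((-(m:ℤ) : ℤ) : ℝ) = (y + ((-(m:ℤ) - 1 : ℤ) : ℝ)) + 1 := by push_cast; ring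
      rw [e2, e3] at ih
      rw [h] at ih
      exact ih

lemma strip_bound {f : ℝ → ℝ → ℝ} (hf : Continuous fun p : ℝ × ℝ => f p.1 p.2)
    (hp : ∀ x y : ℝ, f (x + 1) (y + 1) = f x y) (c : ℝ) :
    ∃ M : ℝ, 0 ≤ M ∧ ∀ x y : ℝ, |y - x| ≤ c → |f x y| ≤ M := by
  have hK : IsCompact (Icc (0:ℝ) 1 ×ˢ Icc (-c) (c + 1)) := isCompact_Icc.prod isCompact_Icc
  obtain ⟨C, hC⟩ := hK.exists_bound_of_continuousOn hf.continuousOn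
  refine ⟨max C 0, le_max_right _ _, fun x y hxy => ?_⟩
  set k : ℤ := ⌊x⌋
  have hfxy : f (x - k + k) (y - k + k) = f (x - k) (y - k) := per_int hp k (x - k) (y - k)
  have hx1 : x - k + k = x := by ring
  have hy1 : y - k + k = y := by ring
  rw [hx1, hy1] at hfxy
  have hmem : ((x - k, y - k) : ℝ × ℝ) ∈ Icc (0:ℝ) 1 ×ˢ Icc (-c) (c + 1) := by
    have h1 : (0:ℝ) ≤ x - k := by
      have := Int.floor_le x; linarith
    have h2 : x - k ≤ 1 := by
      have := (Int.lt_floor_add_one x); linarith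
    have h3 := abs_le.1 hxy
    refine ⟨⟨h1, h2⟩, ?_, ?_⟩
    · show -c ≤ y - (k:ℝ)
      have : y - k = (y - x) + (x - k) := by ring
      rw [this]; linarith [h3.1]
    · show y - (k:ℝ) ≤ c + 1
      have : y - k = (y - x) + (x - k) := by ring
      rw [this]; linarith [h3.2]
  have := hC _ hmem
  rw [Real.norm_eq_abs] at this
  calc |f x y| = |f (x - k) (y - k)| := by rw [hfxy]
    _ ≤ C := this
    _ ≤ max C 0 := le_max_left _ _

/-- The local driving force at site `j`. -/
noncomputable def Gj (V : ℝ → ℝ → ℝ) (c : ℝ) (n : ℕ) (j : ℤ) (u : Kn n) : ℝ :=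
  -(V2 V (u.val (j - 1)) (u.val j)) - V1 V (u.val j) (u.val (j + 1)) + c

/-- The backward shift, as a self-map of `Kn n`. -/
def bshiftK (n : ℕ) (u : Kn n) : Kn n :=
  ⟨fun i => u.val (i + 1), fun i => by simpa using u.2 (i + 1)⟩

lemma seq_deriv {f : ℝ → ℝ} {a : ℝ} (hf : HasDerivWithinAt f a (Set.Ici 0) 0) :
    Tendsto (fun m : ℕ => ((m:ℝ) + 1) * (f (1 / ((m:ℝ) + 1)) - f 0)) atTop (𝓝 a) := by
  have h := hasDerivWithinAt_iff_tendsto_slope.1 hf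
  have hseq : Tendsto (fun m : ℕ => 1 / ((m:ℝ) + 1)) atTop (𝓝[Set.Ici (0:ℝ) \ {0}] 0) := by
    apply tendsto_nhdsWithin_of_tendsto_nhds_of_eventually_within
    · exact tendsto_one_div_add_atTop_nhds_zero_nat
    · filter_upwards with m
      have hpos : (0:ℝ) < 1 / ((m:ℝ) + 1) := by positivity
      exact ⟨le_of_lt hpos, by simp only [Set.mem_singleton_iff]; exact ne_of_gt hpos⟩
  have hcomp := h.comp hseq
  have heq : ∀ m : ℕ, slope f 0 (1 / ((m:ℝ) + 1)) = ((m:ℝ) + 1) * (f (1 / ((m:ℝ) + 1)) - f 0) := by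
    intro m
    have hne : ((m:ℝ) + 1) ≠ 0 := by positivity
    rw [slope_def_field, sub_zero, div_eq_mul_inv, one_div, inv_inv, mul_comm]
  exact (tendsto_congr fun m => (heq m)).1 hcomp

lemma lip_of_deriv {f g : ℝ → ℝ} {B : ℝ}
    (hf : ∀ t ∈ Set.Ici (0:ℝ), HasDerivWithinAt f (g t) (Set.Ici 0) t)
    (hB : ∀ t ∈ Set.Ici (0:ℝ), |g t| ≤ B) {s t : ℝ} (hs : 0 ≤ s) (ht : 0 ≤ t) :
    |f t - f s| ≤ B * |t - s| := by
  have := Convex.norm_image_sub_le_of_norm_hasDerivWithin_le hf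
    (fun x hx => by simpa [Real.norm_eq_abs] using hB x hx) (convex_Ici 0) hs ht
  simpa [Real.norm_eq_abs] using this

theorem energy_dissipation_identity
    (δ : ℝ) (hδ : 0 < δ) (V : ℝ → ℝ → ℝ) (F : ℝ → ℝ)
    (hV : ContDiff ℝ 2 (Function.uncurry V))
    (hper : ∀ x y : ℝ, V (x + 1) (y + 1) = V x y)
    (htwist : ∀ x y : ℝ, V12 V x y ≤ -δ)
    (hF : Continuous F)
    (n : ℕ) (φ : ℝ → Kn n → Kn n)
    (hφ0 : φ 0 = id)
    (hφadd : ∀ s t : ℝ, 0 ≤ s → 0 ≤ t → φ (s + t) = φ s ∘ φ t)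
    (hφcont : ∀ t : ℝ, 0 ≤ t → Continuous (φ t))
    (hφsol : ∀ u : Kn n, ∀ j : ℤ, ∀ t : ℝ, 0 ≤ t →
      HasDerivWithinAt (fun s => (φ s u).val j)
        (-(V2 V ((φ t u).val (j - 1)) ((φ t u).val j)) -
          V1 V ((φ t u).val j) ((φ t u).val (j + 1)) + F t)
        (Set.Ici (0 : ℝ)) t)
    (hφshift : ∀ t : ℝ, 0 ≤ t → ∀ u : Kn n, φ t (shiftK n u) = shiftK n (φ t u))
    (hFconst : ∀ t t' : ℝ, F t = F t')
    (μ : Measure (Kn n)) [IsProbabilityMeasure μ]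
    (hshift : Measure.map (shiftK n) μ = μ)
    (hφinv : ∀ t : ℝ, 0 ≤ t → Measure.map (φ t) μ = μ) :
    (∫ u : Kn n, (-(V2 V (u.val (-1)) (u.val 0)) - V1 V (u.val 0) (u.val 1) + F 0) ^ 2 ∂μ
        = F 0 * ∫ u : Kn n, ((φ 1 u).val 0 - u.val 0) ∂μ) ∧
    ((∫ u : Kn n, ((φ 1 u).val 0 - u.val 0) ∂μ) = 0 →
      ∀ᵐ u : Kn n ∂μ, ∀ j : ℤ,
        -(V2 V (u.val (j - 1)) (u.val j)) - V1 V (u.val j) (u.val (j + 1)) + F 0 = 0) := by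
  classical
  obtain ⟨M1, hM10, hM1⟩ := strip_bound (continuous_V1 hV) (V1_per hper) n
  obtain ⟨M2, hM20, hM2⟩ := strip_bound (continuous_V2 hV) (V2_per hper) n
  have hVc : Continuous fun p : ℝ × ℝ => V p.1 p.2 := hV.continuous
  obtain ⟨MV, hMV0, hMV⟩ := strip_bound hVc hper n
  set B : ℝ := M2 + M1 + |F 0| with hBdef
  have hBnn : 0 ≤ B := by positivity
  -- spacing bounds
  have hspace : ∀ (u : Kn n) (j : ℤ), |u.val j - u.val (j - 1)| ≤ (n : ℝ) := by
    intro u j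
    have := u.2 (j - 1)
    have e : j - 1 + 1 = j := by ring
    rwa [e] at this
  -- bound on Gj
  have hGb : ∀ (j : ℤ) (u : Kn n), |Gj V (F 0) n j u| ≤ B := by
    intro j u
    have h2 : |V2 V (u.val (j - 1)) (u.val j)| ≤ M2 := hM2 _ _ (hspace u j)
    have h1 : |V1 V (u.val j) (u.val (j + 1))| ≤ M1 := hM1 _ _ (u.2 j)
    have habs : |(-(V2 V (u.val (j - 1)) (u.val j)) - V1 V (u.val j) (u.val (j + 1))) + F 0|
        ≤ |V2 V (u.val (j - 1)) (u.val j)| + |V1 V (u.val j) (u.val (j + 1))| + |F 0| := by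
      calc |(-(V2 V (u.val (j - 1)) (u.val j)) - V1 V (u.val j) (u.val (j + 1))) + F 0|
          ≤ |(-(V2 V (u.val (j - 1)) (u.val j)) - V1 V (u.val j) (u.val (j + 1)))| + |F 0| :=
            abs_add_le _ _
        _ ≤ |V2 V (u.val (j - 1)) (u.val j)| + |V1 V (u.val j) (u.val (j + 1))| + |F 0| := by
            have := abs_sub (-(V2 V (u.val (j - 1)) (u.val j))) (V1 V (u.val j) (u.val (j + 1)))
            simp only [abs_neg] at this
            linarith
    calc |Gj V (F 0) n j u|
        = |(-(V2 V (u.val (j - 1)) (u.val j)) - V1 V (u.val j) (u.val (j + 1))) + F 0| := rfl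
      _ ≤ |V2 V (u.val (j - 1)) (u.val j)| + |V1 V (u.val j) (u.val (j + 1))| + |F 0| := habs
      _ ≤ M2 + M1 + |F 0| := by linarith
  -- derivative of trajectories
  have hderiv : ∀ (u : Kn n) (j : ℤ) (t : ℝ), 0 ≤ t →
      HasDerivWithinAt (fun s => (φ s u).val j) (Gj V (F 0) n j (φ t u)) (Set.Ici 0) t := by
    intro u j t ht
    have h := hφsol u j t ht
    rwa [hFconst t 0] at h
  have hφ0v : ∀ u : Kn n, φ 0 u = u := fun u => by rw [hφ0]; rfl
  have hLip : ∀ (u : Kn n) (j : ℤ) (s t : ℝ), 0 ≤ s → 0 ≤ t →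
      |(φ t u).val j - (φ s u).val j| ≤ B * |t - s| := by
    intro u j s t hs ht
    exact lip_of_deriv (fun r hr => hderiv u j r hr) (fun r _ => hGb j (φ r u)) hs ht
  have hstep : ∀ (u : Kn n) (j : ℤ) (t : ℝ), 0 ≤ t → |(φ t u).val j - u.val j| ≤ B * t := by
    intro u j t ht
    have := hLip u j 0 t le_rfl ht
    rw [hφ0v u] at this
    simpa [abs_of_nonneg ht] using this
  -- continuity of evaluations and Gj
  have hev : ∀ j : ℤ, Continuous fun u : Kn n => u.val j :=
    fun j => (continuous_apply j).comp continuous_subtype_val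
  have hGjc : ∀ j : ℤ, Continuous (Gj V (F 0) n j) := by
    intro j
    exact ((((continuous_V2 hV).comp ((hev (j - 1)).prodMk (hev j))).neg).sub
      ((continuous_V1 hV).comp ((hev j).prodMk (hev (j + 1))))).add continuous_const
  -- integrability helper
  have hint : ∀ (f : Kn n → ℝ) (C : ℝ), Continuous f → (∀ u, |f u| ≤ C) → Integrable f μ := by
    intro f C hf hC
    exact (integrable_const C).mono' hf.aestronglyMeasurable
      (ae_of_all μ fun u => by simpa [Real.norm_eq_abs] using hC u)
  -- invariance transfer
  have hmapφ : ∀ (t : ℝ), 0 ≤ t → ∀ (f : Kn n → ℝ), Continuous f →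
      ∫ u, f (φ t u) ∂μ = ∫ u, f u ∂μ := by
    intro t ht f hf
    conv_rhs => rw [← hφinv t ht]
    rw [integral_map (hφcont t ht).measurable.aemeasurable hf.aestronglyMeasurable]
  have hmapsh : ∀ (f : Kn n → ℝ), Continuous f →
      ∫ u, f (shiftK n u) ∂μ = ∫ u, f u ∂μ := by
    intro f hf
    have hc : Continuous (shiftK n) := by
      apply Continuous.subtype_mk
      exact continuous_pi fun i => hev (i - 1)
    conv_rhs => rw [← hshift]
    rw [integral_map hc.measurable.aemeasurable hf.aestronglyMeasurable]
  -- Claim 1 : Φ 1 = ∫ Gj 0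
  set Φ : ℝ → ℝ := fun t => ∫ u, ((φ t u).val 0 - u.val 0) ∂μ with hΦdef
  have hΦc : ∀ t : ℝ, 0 ≤ t → Continuous fun u : Kn n => (φ t u).val 0 - u.val 0 :=
    fun t ht => ((hev 0).comp (hφcont t ht)).sub (hev 0)
  have hΦint : ∀ t : ℝ, 0 ≤ t → Integrable (fun u : Kn n => (φ t u).val 0 - u.val 0) μ :=
    fun t ht => hint _ (B * t) (hΦc t ht) (fun u => hstep u 0 t ht)
  have hΦadd : ∀ s t : ℝ, 0 ≤ s → 0 ≤ t → Φ (s + t) = Φ s + Φ t := by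
    intro s t hs ht
    have h1 : ∀ u : Kn n, (φ (s + t) u).val 0 - u.val 0 =
        ((φ s (φ t u)).val 0 - (φ t u).val 0) + ((φ t u).val 0 - u.val 0) := by
      intro u
      rw [hφadd s t hs ht]
      show (φ s (φ t u)).val 0 - u.val 0 = _
      ring
    have hi1 : Integrable (fun u : Kn n => (φ s (φ t u)).val 0 - (φ t u).val 0) μ :=
      hint _ (B * s) ((hΦc s hs).comp (hφcont t ht)) (fun u => hstep (φ t u) 0 s hs)
    calc Φ (s + t) = ∫ u, (((φ s (φ t u)).val 0 - (φ t u).val 0)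
            + ((φ t u).val 0 - u.val 0)) ∂μ := by
          simp only [hΦdef]
          exact integral_congr_ae (ae_of_all μ h1)
      _ = (∫ u, ((φ s (φ t u)).val 0 - (φ t u).val 0) ∂μ)
            + ∫ u, ((φ t u).val 0 - u.val 0) ∂μ := integral_add hi1 (hΦint t ht)
      _ = Φ s + Φ t := by
          rw [hmapφ t ht _ (hΦc s hs)]
  have hΦ0 : Φ 0 = 0 := by
    simp only [hΦdef]
    have : ∀ u : Kn n, (φ 0 u).val 0 - u.val 0 = 0 := fun u => by rw [hφ0v u]; ring
    simp [this]
  have hΦnat : ∀ (m : ℕ) (h : ℝ), 0 ≤ h → Φ ((m : ℝ) * h) = (m : ℝ) * Φ h := by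
    intro m h hh
    induction m with
    | zero => simpa using hΦ0
    | succ k ih =>
        have e : ((k + 1 : ℕ) : ℝ) * h = (k : ℝ) * h + h := by push_cast; ring
        rw [e, hΦadd _ _ (by positivity) hh, ih]
        push_cast; ring
  have hGint : Integrable (Gj V (F 0) n 0) μ := hint _ B (hGjc 0) (hGb 0)
  have hΦ1 : Φ 1 = ∫ u, Gj V (F 0) n 0 u ∂μ := by
    have hpos : ∀ m : ℕ, (0:ℝ) ≤ 1 / ((m:ℝ) + 1) := fun m => by positivity
    have hDCT : Tendsto
        (fun m : ℕ => ∫ u, ((m:ℝ) + 1) * ((φ (1 / ((m:ℝ) + 1)) u).val 0 - u.val 0) ∂μ)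
        atTop (𝓝 (∫ u, Gj V (F 0) n 0 u ∂μ)) := by
      apply tendsto_integral_of_dominated_convergence (fun _ => B)
      · intro m
        exact (continuous_const.mul (hΦc _ (hpos m))).aestronglyMeasurable
      · exact integrable_const B
      · intro m
        refine ae_of_all μ fun u => ?_
        rw [Real.norm_eq_abs, abs_mul]
        have h1 := hstep u 0 _ (hpos m)
        have h2 : |((m:ℝ) + 1)| = (m:ℝ) + 1 := abs_of_pos (by positivity)
        rw [h2]
        have hne : ((m:ℝ) + 1) ≠ 0 := by positivity
        calc ((m:ℝ) + 1) * |(φ (1 / ((m:ℝ) + 1)) u).val 0 - u.val 0|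
            ≤ ((m:ℝ) + 1) * (B * (1 / ((m:ℝ) + 1))) := by
              apply mul_le_mul_of_nonneg_left h1 (by positivity)
          _ = B := by field_simp
      · refine ae_of_all μ fun u => ?_
        have hd := hderiv u 0 0 le_rfl
        rw [hφ0v u] at hd
        have := seq_deriv hd
        simpa [hφ0v u] using this
    have hconst : ∀ m : ℕ,
        ∫ u, ((m:ℝ) + 1) * ((φ (1 / ((m:ℝ) + 1)) u).val 0 - u.val 0) ∂μ = Φ 1 := by
      intro m
      rw [integral_const_mul]
      have hne : ((m:ℝ) + 1) ≠ 0 := by positivity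
      have e1 : ((m + 1 : ℕ) : ℝ) * (1 / ((m:ℝ) + 1)) = 1 := by
        push_cast; field_simp
      have := hΦnat (m + 1) (1 / ((m:ℝ) + 1)) (hpos m)
      rw [e1] at this
      rw [this]
      push_cast; ring
    have h2 : Tendsto (fun _ : ℕ => Φ 1) atTop (𝓝 (∫ u, Gj V (F 0) n 0 u ∂μ)) :=
      (tendsto_congr hconst).1 hDCT
    exact (tendsto_nhds_unique h2 tendsto_const_nhds).symm
  -- Claim 2 : ∫ (V1 * G0 + V2 * G1) = 0
  set E : Kn n → ℝ := fun u => V (u.val 0) (u.val 1) with hEdef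
  have hEc : Continuous E := hVc.comp ((hev 0).prodMk (hev 1))
  have hEb : ∀ u : Kn n, |E u| ≤ MV := fun u => hMV _ _ (u.2 0)
  set DE : Kn n → ℝ := fun u =>
    V1 V (u.val 0) (u.val 1) * Gj V (F 0) n 0 u + V2 V (u.val 0) (u.val 1) * Gj V (F 0) n 1 u
    with hDEdef
  have hDEc : Continuous DE := by
    apply Continuous.add
    · exact ((continuous_V1 hV).comp ((hev 0).prodMk (hev 1))).mul (hGjc 0)
    · exact ((continuous_V2 hV).comp ((hev 0).prodMk (hev 1))).mul (hGjc 1)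
  have hDEb : ∀ u : Kn n, |DE u| ≤ M1 * B + M2 * B := by
    intro u
    have h1 : |V1 V (u.val 0) (u.val 1)| ≤ M1 := hM1 _ _ (u.2 0)
    have h2 : |V2 V (u.val 0) (u.val 1)| ≤ M2 := hM2 _ _ (u.2 0)
    calc |DE u| ≤ |V1 V (u.val 0) (u.val 1) * Gj V (F 0) n 0 u|
          + |V2 V (u.val 0) (u.val 1) * Gj V (F 0) n 1 u| := abs_add_le _ _
      _ ≤ M1 * B + M2 * B := by
          rw [abs_mul, abs_mul]
          gcongr <;> [exact hGb 0 u; exact hGb 1 u] <;> try positivity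
  have hEd : ∀ (u : Kn n) (t : ℝ), 0 ≤ t →
      HasDerivWithinAt (fun s => E (φ s u)) (DE (φ t u)) (Set.Ici 0) t := by
    intro u t ht
    set p : ℝ × ℝ := ((φ t u).val 0, (φ t u).val 1) with hpdef
    have hL : HasFDerivAt (Function.uncurry V) (fderiv ℝ (Function.uncurry V) p) p :=
      ((hV.differentiable (by norm_num)) p).hasFDerivAt
    have hpair : HasDerivWithinAt (fun s => ((φ s u).val 0, (φ s u).val 1))
        ((Gj V (F 0) n 0 (φ t u), Gj V (F 0) n 1 (φ t u))) (Set.Ici 0) t :=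
      (hderiv u 0 t ht).prodMk (hderiv u 1 t ht)
    have hcomp := hL.comp_hasDerivWithinAt t hpair
    have hval : fderiv ℝ (Function.uncurry V) p
        ((Gj V (F 0) n 0 (φ t u), Gj V (F 0) n 1 (φ t u))) = DE (φ t u) := by
      have hab : ((Gj V (F 0) n 0 (φ t u), Gj V (F 0) n 1 (φ t u)) : ℝ × ℝ)
          = Gj V (F 0) n 0 (φ t u) • ((1:ℝ), (0:ℝ)) + Gj V (F 0) n 1 (φ t u) • ((0:ℝ), (1:ℝ)) := by
        simp [Prod.ext_iff]
      rw [hab, map_add, ContinuousLinearMap.map_smul, ContinuousLinearMap.map_smul, hpdef]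
      rw [← V1_eq hV, ← V2_eq hV]
      simp only [hDEdef, smul_eq_mul, hpdef]
      ring
    rw [← hval]
    exact hcomp
  have hB0 : ∫ u, DE u ∂μ = 0 := by
    have hpos : ∀ m : ℕ, (0:ℝ) ≤ 1 / ((m:ℝ) + 1) := fun m => by positivity
    set C2 : ℝ := M1 * B + M2 * B with hC2def
    have hC2nn : 0 ≤ C2 := by positivity
    have hElip : ∀ (u : Kn n) (t : ℝ), 0 ≤ t → |E (φ t u) - E u| ≤ C2 * t := by
      intro u t ht
      have := lip_of_deriv (f := fun s => E (φ s u)) (g := fun s => DE (φ s u))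
        (fun r hr => hEd u r hr) (fun r _ => hDEb (φ r u)) le_rfl ht
      simp only [hφ0v] at this
      simpa [abs_of_nonneg ht] using this
    have hDCT : Tendsto
        (fun m : ℕ => ∫ u, ((m:ℝ) + 1) * (E (φ (1 / ((m:ℝ) + 1)) u) - E u) ∂μ)
        atTop (𝓝 (∫ u, DE u ∂μ)) := by
      apply tendsto_integral_of_dominated_convergence (fun _ => C2)
      · intro m
        exact (continuous_const.mul ((hEc.comp (hφcont _ (hpos m))).sub hEc)).aestronglyMeasurable
      · exact integrable_const C2
      · intro m
        refine ae_of_all μ fun u => ?_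
        rw [Real.norm_eq_abs, abs_mul]
        have h1 := hElip u _ (hpos m)
        have h2 : |((m:ℝ) + 1)| = (m:ℝ) + 1 := abs_of_pos (by positivity)
        rw [h2]
        calc ((m:ℝ) + 1) * |E (φ (1 / ((m:ℝ) + 1)) u) - E u|
            ≤ ((m:ℝ) + 1) * (C2 * (1 / ((m:ℝ) + 1))) :=
              mul_le_mul_of_nonneg_left h1 (by positivity)
          _ = C2 := by field_simp
      · refine ae_of_all μ fun u => ?_
        have hd := hEd u 0 le_rfl
        rw [hφ0v u] at hd
        have := seq_deriv hd
        simpa [hφ0v u] using this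
    have hconst : ∀ m : ℕ,
        ∫ u, ((m:ℝ) + 1) * (E (φ (1 / ((m:ℝ) + 1)) u) - E u) ∂μ = 0 := by
      intro m
      rw [integral_const_mul]
      have hi1 : Integrable (fun u : Kn n => E (φ (1 / ((m:ℝ) + 1)) u)) μ :=
        hint _ MV (hEc.comp (hφcont _ (hpos m))) (fun u => hEb _)
      have hi2 : Integrable E μ := hint _ MV hEc hEb
      rw [integral_sub hi1 hi2, hmapφ _ (hpos m) E hEc]
      ring
    have h2 : Tendsto (fun _ : ℕ => (0:ℝ)) atTop (𝓝 (∫ u, DE u ∂μ)) :=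
      (tendsto_congr hconst).1 hDCT
    exact tendsto_nhds_unique h2 tendsto_const_nhds
  -- Claim 3 : shift identity
  have hC3 : ∫ u, V2 V (u.val (-1)) (u.val 0) * Gj V (F 0) n 0 u ∂μ
      = ∫ u, V2 V (u.val 0) (u.val 1) * Gj V (F 0) n 1 u ∂μ := by
    set g : Kn n → ℝ := fun u => V2 V (u.val 0) (u.val 1) * Gj V (F 0) n 1 u with hgdef
    have hgc : Continuous g :=
      ((continuous_V2 hV).comp ((hev 0).prodMk (hev 1))).mul (hGjc 1)
    have hcomp : ∀ u : Kn n, g (shiftK n u) = V2 V (u.val (-1)) (u.val 0) * Gj V (F 0) n 0 u := by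
      intro u
      show V2 V (u.val (0 - 1)) (u.val (1 - 1)) *
        (-(V2 V (u.val (1 - 1 - 1)) (u.val (1 - 1))) - V1 V (u.val (1 - 1)) (u.val (1 + 1 - 1)) + F 0)
        = V2 V (u.val (-1)) (u.val 0) *
          (-(V2 V (u.val (0 - 1)) (u.val 0)) - V1 V (u.val 0) (u.val (0 + 1)) + F 0)
      norm_num
    calc ∫ u, V2 V (u.val (-1)) (u.val 0) * Gj V (F 0) n 0 u ∂μ
        = ∫ u, g (shiftK n u) ∂μ := integral_congr_ae (ae_of_all μ fun u => (hcomp u).symm)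
      _ = ∫ u, g u ∂μ := hmapsh g hgc
  -- Part 1
  have hGj0 : ∀ u : Kn n, Gj V (F 0) n 0 u
      = -(V2 V (u.val (-1)) (u.val 0)) - V1 V (u.val 0) (u.val 1) + F 0 := by
    intro u
    show -(V2 V (u.val (0 - 1)) (u.val 0)) - V1 V (u.val 0) (u.val (0 + 1)) + F 0 = _
    norm_num
  have hpart1 : ∫ u, (Gj V (F 0) n 0 u) ^ 2 ∂μ = F 0 * Φ 1 := by
    have hptwise : ∀ u : Kn n, (Gj V (F 0) n 0 u) ^ 2 =
        (-(V2 V (u.val (-1)) (u.val 0) * Gj V (F 0) n 0 u)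
          - V1 V (u.val 0) (u.val 1) * Gj V (F 0) n 0 u)
        + F 0 * Gj V (F 0) n 0 u := by
      intro u
      rw [pow_two]
      nth_rewrite 1 [hGj0 u]
      ring
    have hi1 : Integrable (fun u : Kn n =>
        -(V2 V (u.val (-1)) (u.val 0) * Gj V (F 0) n 0 u)
          - V1 V (u.val 0) (u.val 1) * Gj V (F 0) n 0 u) μ := by
      apply hint _ (M2 * B + M1 * B)
      · exact (((continuous_V2 hV).comp ((hev (-1)).prodMk (hev 0))).mul (hGjc 0)).neg.sub
          (((continuous_V1 hV).comp ((hev 0).prodMk (hev 1))).mul (hGjc 0))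
      · intro u
        have h2 : |V2 V (u.val (-1)) (u.val 0)| ≤ M2 := by
          have := hM2 (u.val (-1)) (u.val 0) (by simpa using u.2 (-1))
          exact this
        have h1 : |V1 V (u.val 0) (u.val 1)| ≤ M1 := hM1 _ _ (u.2 0)
        have hg := hGb 0 u
        calc |(-(V2 V (u.val (-1)) (u.val 0) * Gj V (F 0) n 0 u))
              - V1 V (u.val 0) (u.val 1) * Gj V (F 0) n 0 u|
            ≤ |V2 V (u.val (-1)) (u.val 0) * Gj V (F 0) n 0 u|
              + |V1 V (u.val 0) (u.val 1) * Gj V (F 0) n 0 u| := by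
              have := abs_sub (-(V2 V (u.val (-1)) (u.val 0) * Gj V (F 0) n 0 u))
                (V1 V (u.val 0) (u.val 1) * Gj V (F 0) n 0 u)
              simpa [abs_neg] using this
          _ ≤ M2 * B + M1 * B := by
              rw [abs_mul, abs_mul]
              gcongr
    have hi2 : Integrable (fun u : Kn n => F 0 * Gj V (F 0) n 0 u) μ :=
      (hGint.const_mul (F 0))
    have hiV2 : Integrable (fun u : Kn n => V2 V (u.val (-1)) (u.val 0) * Gj V (F 0) n 0 u) μ := by
      apply hint _ (M2 * B)
      · exact ((continuous_V2 hV).comp ((hev (-1)).prodMk (hev 0))).mul (hGjc 0)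
      · intro u
        rw [abs_mul]
        have h2 : |V2 V (u.val (-1)) (u.val 0)| ≤ M2 := hM2 _ _ (by simpa using u.2 (-1))
        exact mul_le_mul h2 (hGb 0 u) (abs_nonneg _) hM20
    have hiV1 : Integrable (fun u : Kn n => V1 V (u.val 0) (u.val 1) * Gj V (F 0) n 0 u) μ := by
      apply hint _ (M1 * B)
      · exact ((continuous_V1 hV).comp ((hev 0).prodMk (hev 1))).mul (hGjc 0)
      · intro u
        rw [abs_mul]
        exact mul_le_mul (hM1 _ _ (u.2 0)) (hGb 0 u) (abs_nonneg _) hM10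
    have hiV2' : Integrable (fun u : Kn n => V2 V (u.val 0) (u.val 1) * Gj V (F 0) n 1 u) μ := by
      apply hint _ (M2 * B)
      · exact ((continuous_V2 hV).comp ((hev 0).prodMk (hev 1))).mul (hGjc 1)
      · intro u
        rw [abs_mul]
        exact mul_le_mul (hM2 _ _ (u.2 0)) (hGb 1 u) (abs_nonneg _) hM20
    have hiV1G : Integrable (fun u : Kn n => V1 V (u.val 0) (u.val 1) * Gj V (F 0) n 0 u) μ := hiV1
    calc ∫ u, (Gj V (F 0) n 0 u) ^ 2 ∂μ
        = ∫ u, ((-(V2 V (u.val (-1)) (u.val 0) * Gj V (F 0) n 0 u)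
            - V1 V (u.val 0) (u.val 1) * Gj V (F 0) n 0 u)
          + F 0 * Gj V (F 0) n 0 u) ∂μ := integral_congr_ae (ae_of_all μ hptwise)
      _ = (∫ u, (-(V2 V (u.val (-1)) (u.val 0) * Gj V (F 0) n 0 u)
            - V1 V (u.val 0) (u.val 1) * Gj V (F 0) n 0 u) ∂μ)
          + ∫ u, F 0 * Gj V (F 0) n 0 u ∂μ := integral_add hi1 hi2
      _ = (-(∫ u, V2 V (u.val (-1)) (u.val 0) * Gj V (F 0) n 0 u ∂μ)
            - ∫ u, V1 V (u.val 0) (u.val 1) * Gj V (F 0) n 0 u ∂μ)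
          + F 0 * ∫ u, Gj V (F 0) n 0 u ∂μ := by
          have hiV2n : Integrable (fun u : Kn n =>
              -(V2 V (u.val (-1)) (u.val 0) * Gj V (F 0) n 0 u)) μ := hiV2.neg
          rw [integral_sub hiV2n hiV1, integral_neg, integral_const_mul]
      _ = (-(∫ u, V2 V (u.val 0) (u.val 1) * Gj V (F 0) n 1 u ∂μ)
            - ∫ u, V1 V (u.val 0) (u.val 1) * Gj V (F 0) n 0 u ∂μ)
          + F 0 * ∫ u, Gj V (F 0) n 0 u ∂μ := by rw [hC3]
      _ = -(∫ u, DE u ∂μ) + F 0 * ∫ u, Gj V (F 0) n 0 u ∂μ := by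
          have hDEeq : ∫ u, DE u ∂μ
              = (∫ u, V1 V (u.val 0) (u.val 1) * Gj V (F 0) n 0 u ∂μ)
                + ∫ u, V2 V (u.val 0) (u.val 1) * Gj V (F 0) n 1 u ∂μ := by
            rw [← integral_add hiV1G hiV2']
          rw [hDEeq]; ring
      _ = F 0 * Φ 1 := by rw [hB0, hΦ1]; ring
  constructor
  · have : ∫ u, (Gj V (F 0) n 0 u) ^ 2 ∂μ
        = ∫ u : Kn n, (-(V2 V (u.val (-1)) (u.val 0)) - V1 V (u.val 0) (u.val 1) + F 0) ^ 2 ∂μ :=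
      integral_congr_ae (ae_of_all μ fun u => by simp only [hGj0])
    rw [← this, hpart1, hΦdef]
  · intro hv0
    have hΦ10 : Φ 1 = 0 := hv0
    have hsq0 : ∫ u, (Gj V (F 0) n 0 u) ^ 2 ∂μ = 0 := by rw [hpart1, hΦ10]; ring
    have hisq : Integrable (fun u : Kn n => (Gj V (F 0) n 0 u) ^ 2) μ := by
      apply hint _ (B ^ 2)
      · exact (hGjc 0).pow 2
      · intro u
        rw [abs_pow]
        exact pow_le_pow_left₀ (abs_nonneg _) (hGb 0 u) 2
    have hae : ∀ᵐ u ∂μ, Gj V (F 0) n 0 u = 0 := by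
      have := (integral_eq_zero_iff_of_nonneg
        (fun u : Kn n => sq_nonneg (Gj V (F 0) n 0 u)) hisq).1 hsq0
      filter_upwards [this] with u hu
      have : (Gj V (F 0) n 0 u) ^ 2 = 0 := hu
      exact pow_eq_zero_iff (n := 2) (by norm_num) |>.1 this
    -- propagate to all j via shifts
    have hbmem : Continuous (bshiftK n) := by
      apply Continuous.subtype_mk
      exact continuous_pi fun i => hev (i + 1)
    have hsc : Continuous (shiftK n) := by
      apply Continuous.subtype_mk
      exact continuous_pi fun i => hev (i - 1)
    have hbs : ∀ u : Kn n, shiftK n (bshiftK n u) = u := by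
      intro u
      apply Subtype.ext
      funext i
      show u.val (i - 1 + 1) = u.val i
      congr 1; ring
    have hsb : ∀ u : Kn n, bshiftK n (shiftK n u) = u := by
      intro u
      apply Subtype.ext
      funext i
      show u.val (i + 1 - 1) = u.val i
      congr 1; ring
    have hbinv : Measure.map (bshiftK n) μ = μ := by
      conv_lhs => rw [← hshift]
      rw [Measure.map_map hbmem.measurable hsc.measurable]
      have : (bshiftK n ∘ shiftK n) = id := funext hsb
      rw [this, Measure.map_id]
    have hGshift : ∀ (j : ℤ) (u : Kn n),
        Gj V (F 0) n (j + 1) u = Gj V (F 0) n j (bshiftK n u) := by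
      intro j u
      show -(V2 V (u.val (j + 1 - 1)) (u.val (j + 1))) - V1 V (u.val (j + 1)) (u.val (j + 1 + 1))
          + F 0
        = -(V2 V (u.val (j - 1 + 1)) (u.val (j + 1))) - V1 V (u.val (j + 1)) (u.val (j + 1 + 1))
          + F 0
      have e : j + 1 - 1 = j - 1 + 1 := by ring
      rw [e]
    have hGshift' : ∀ (j : ℤ) (u : Kn n),
        Gj V (F 0) n (j - 1) u = Gj V (F 0) n j (shiftK n u) := by
      intro j u
      show -(V2 V (u.val (j - 1 - 1)) (u.val (j - 1))) - V1 V (u.val (j - 1)) (u.val (j - 1 + 1))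
          + F 0
        = -(V2 V (u.val (j - 1 - 1)) (u.val (j - 1))) - V1 V (u.val (j - 1)) (u.val (j + 1 - 1))
          + F 0
      have e : j - 1 + 1 = j + 1 - 1 := by ring
      rw [e]
    have htrans : ∀ (f : Kn n → Kn n), Measurable f → Measure.map f μ = μ → ∀ (j : ℤ),
        (∀ᵐ u ∂μ, Gj V (F 0) n j u = 0) → (∀ᵐ u ∂μ, Gj V (F 0) n j (f u) = 0) := by
      intro f hf hinv j hj
      have hset : MeasurableSet {u : Kn n | Gj V (F 0) n j u = 0} :=
        (hGjc j).measurable (measurableSet_singleton 0)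
      have h2 : ∀ᵐ u ∂(Measure.map f μ), Gj V (F 0) n j u = 0 := by rw [hinv]; exact hj
      exact (ae_map_iff hf.aemeasurable hset).1 h2
    have hall : ∀ j : ℤ, ∀ᵐ u ∂μ, Gj V (F 0) n j u = 0 := by
      intro j
      induction j using Int.induction_on with
      | zero => exact hae
      | succ k ih =>
          have h2 := htrans _ hbmem.measurable hbinv k ih
          filter_upwards [h2] with u hu
          rw [hGshift k u]; exact hu
      | pred k ih =>
          have h2 := htrans _ hsc.measurable hshift (-(k:ℤ)) ih
          filter_upwards [h2] with u hu
          rw [hGshift' (-(k:ℤ)) u]; exact hu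
    rw [ae_all_iff]
    intro j
    filter_upwards [hall j] with u hu
    exact hu
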